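/- For a formula α of the language L∘, the following are equivalent: (1) α is valid over the class of all frames under the reflexive-insensitive semantics; (2) α is valid over the class of all reflexive frames under the reflexive-insensitive semantics. -/
import Mathlib


/-- Formulas of the language L∘. -/
inductive RIForm : Type where
  | var : Nat → RIForm
  | neg : RIForm → RIForm
  | and : RIForm → RIForm → RIForm
  | circ : RIForm → RIForm
deriving DecidableEq

def RIForm.imp (φ ψ : RIForm) : RIForm := .neg (.and φ (.neg ψ))
def RIForm.or (φ ψ : RIForm) : RIForm := .neg (.and (.neg φ) (.neg ψ))
def RIForm.top : RIForm := .neg (.and (.var 0) (.neg (.var 0)))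
def RIForm.bot : RIForm := .and (.var 0) (.neg (.var 0))
def RIForm.iff (φ ψ : RIForm) : RIForm := .and (φ.imp ψ) (ψ.imp φ)

/-- Reflexive-insensitive satisfaction. -/
def riSat {W : Type} (R : W → W → Prop) (V : Nat → W → Prop) : W → RIForm → Prop
  | w, .var p => V p w
  | w, .neg φ => ¬ riSat R V w φ
  | w, .and φ ψ => riSat R V w φ ∧ riSat R V w ψ
  | w, .circ φ => ¬ riSat R V w φ ∨ ∀ x, R w x → riSat R V x φ

/-- Validity on a frame under the reflexive-insensitive semantics. -/
def riValid {W : Type} (R : W → W → Prop) (φ : RIForm) : Prop :=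
  ∀ V w, riSat R V w φ

theorem valid_all_iff_valid_reflexive (α : RIForm) :
    (∀ (W : Type) (R : W → W → Prop), riValid R α) ↔
    (∀ (W : Type) (R : W → W → Prop), (∀ w, R w w) → riValid R α) := by
  have key : ∀ (W : Type) (R : W → W → Prop) (V : Nat → W → Prop) (φ : RIForm) (w : W),
      riSat R V w φ ↔ riSat (fun a b => R a b ∨ a = b) V w φ := by
    intro W R V φ
    induction φ with
    | var p => intro w; simp [riSat]
    | neg φ ih => intro w; simp [riSat, ih]
    | and φ ψ ih1 ih2 => intro w; simp [riSat, ih1, ih2]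
    | circ φ ih =>
      intro w
      simp only [riSat]
      by_cases h : riSat R V w φ
      · constructor
        · rintro (h' | h')
          · exact Or.inl (fun hc => h' ((ih w).mpr hc))
          · refine Or.inr fun x hx => ?_
            rcases hx with hx | rfl
            · exact (ih x).mp (h' x hx)
            · exact (ih w).mp h
        · rintro (h' | h')
          · exact absurd ((ih w).mp h) h'
          · exact Or.inr fun x hx => (ih x).mpr (h' x (Or.inl hx))
      · exact ⟨fun _ => Or.inl fun hc => h ((ih w).mpr hc),
          fun _ => Or.inl h⟩
  constructor
  · intro h W R _; exact h W R
  · intro h W R V w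
    exact (key W R V α w).mpr
      (h W (fun a b => R a b ∨ a = b) (fun w => Or.inr rfl) V w)
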